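/- Let d ∈ ℕ and define the symbols σ(x) = −1/(1+|x|²), σ_a(x) = −1/(1+a+|x|²) for a > 0, and σ̃_a(x) = −1/(a+|x|²) for a ≥ 2, all on ℝ^d. Then for every multi-index r and every ϑ ∈ [0,1] there exists a constant C = C(d, r, ϑ) > 0 such that for all x ∈ ℝ^d: (i) |D^r σ_a(x)| ≤ C a^{ϑ−1} (1+|x|)^{−2ϑ−|r|} for all a > 0; (ii) |D^r(σ_a − σ)(x)| ≤ C a^{ϑ} (1+|x|)^{−2−2ϑ−|r|} for all a > 0; (iii) |D^r σ̃_a(x)| ≤ C a^{ϑ−1} (1+|x|)^{−2ϑ−|r|} for all a ≥ 2; (iv) |D^r(σ̃_a − σ)(x)| ≤ C a^{ϑ} (1+|x|)^{−2−2ϑ−|r|} for all a ≥ 2. -/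

import Mathlib

/-!
Write `s = b + |x|²`. Since `D(s⁻ᵐ) = -m s⁻⁽ᵐ⁺¹⁾ · 2x` and `|x| ≤ √s`, induction on the order
with the Leibniz rule shows that the `j`-th derivative of `s⁻ᵐ` is `O(s⁻ᵐ · (√s)⁻ʲ)` uniformly in
`b > 0`. For `b ≥ 1` one has `1 + |x| ≤ 2√s`, which gives (i) and (iii) at `ϑ = 0` (using
`s ≥ b ≥ a`) and at `ϑ = 1`. For (ii) and (iv), the case `ϑ = 0` is the triangle inequality and the
case `ϑ = 1` follows from the resolvent identity `σ_b - σ = (b - 1) σ_b σ` and the Leibniz rule.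
Intermediate `ϑ` follow by interpolation: `u ≤ X` and `u ≤ Y` imply `u ≤ X^(1-ϑ) Y^ϑ`.
-/

section Leibniz

variable {E F : Type*} [NormedAddCommGroup E] [NormedSpace ℝ E]
  [NormedAddCommGroup F] [NormedSpace ℝ F]

-- `‖L x‖ ≤ ‖L‖ ρ`, `‖DL‖ = ‖L‖` and `DᵏL = 0` for `k ≥ 2`, in the geometric shape `A * Pᵏ`
-- that `norm_iteratedFDeriv_smul_le_of_le_mul_pow` consumes.
theorem ContinuousLinearMap.norm_iteratedFDeriv_le_mul_inv_pow (L : E →L[ℝ] F) {x : E} {ρ : ℝ}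
    (hρ : 0 < ρ) (hx : ‖x‖ ≤ ρ) (k : ℕ) :
    ‖iteratedFDeriv ℝ k L x‖ ≤ ‖L‖ * ρ * ρ⁻¹ ^ k := by
  match k with
  | 0 => simpa using L.le_opNorm_of_le hx
  | 1 =>
    rw [← norm_iteratedFDeriv_fderiv, norm_iteratedFDeriv_zero, L.fderiv]
    simp [hρ.ne']
  | k + 2 =>
    rw [← norm_iteratedFDeriv_fderiv, show fderiv ℝ L = fun _ => L from funext fun _ => L.fderiv,
      iteratedFDeriv_const_of_ne (by omega), Pi.zero_apply, norm_zero]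
    positivity

theorem norm_iteratedFDeriv_smul_le_of_le_mul_pow {f : E → ℝ} {g : E → F} {r : ℕ}
    (hf : ContDiff ℝ r f) (hg : ContDiff ℝ r g) {x : E} {A A' P : ℝ}
    (hfx : ∀ j ≤ r, ‖iteratedFDeriv ℝ j f x‖ ≤ A * P ^ j)
    (hgx : ∀ j ≤ r, ‖iteratedFDeriv ℝ j g x‖ ≤ A' * P ^ j) :
    ‖iteratedFDeriv ℝ r (fun y => f y • g y) x‖ ≤ 2 ^ r * A * A' * P ^ r := by
  have hterm : ∀ j ∈ Finset.range (r + 1), (r.choose j : ℝ) * ‖iteratedFDeriv ℝ j f x‖ *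
      ‖iteratedFDeriv ℝ (r - j) g x‖ ≤ r.choose j * (A * A' * P ^ r) := by
    intro j hj
    have hjr : j ≤ r := Nat.lt_succ_iff.1 (Finset.mem_range.1 hj)
    calc (r.choose j : ℝ) * ‖iteratedFDeriv ℝ j f x‖ * ‖iteratedFDeriv ℝ (r - j) g x‖
        ≤ r.choose j * (A * P ^ j) * (A' * P ^ (r - j)) := by
          gcongr
          · exact mul_nonneg (by positivity) ((norm_nonneg _).trans (hfx j hjr))
          · exact hfx j hjr
          · exact hgx (r - j) (Nat.sub_le r j)
      _ = r.choose j * (A * A' * P ^ r) := by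
          rw [← pow_mul_pow_sub P hjr]
          ring
  calc ‖iteratedFDeriv ℝ r (fun y => f y • g y) x‖
      ≤ ∑ j ∈ Finset.range (r + 1), (r.choose j : ℝ) * (A * A' * P ^ r) :=
        (norm_iteratedFDeriv_smul_le hf hg x le_rfl).trans (Finset.sum_le_sum hterm)
    _ = 2 ^ r * A * A' * P ^ r := by
        rw [← Finset.sum_mul, ← Nat.cast_sum, Nat.sum_range_choose]
        push_cast
        ring

end Leibniz

section QuadraticForm

variable {E : Type*} [NormedAddCommGroup E] [NormedSpace ℝ E] {B : E →L[ℝ] E →L[ℝ] ℝ} {b : ℝ}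

theorem hasFDerivAt_inv_pow_add_apply_self (m : ℕ) {x : E} (hx : 0 < b + B x x) :
    HasFDerivAt (fun y => ((b + B y y) ^ m)⁻¹)
      (((b + B x x) ^ (m + 1))⁻¹ • (-(m : ℝ) • (B + B.flip)) x) x := by
  have hq : HasFDerivAt (fun y => b + B y y) ((B + B.flip) x) x := by
    refine ((B.hasFDerivAt.clm_apply (hasFDerivAt_id x)).const_add b).congr_fderiv ?_
    ext v
    simp
  have hinv : HasDerivAt (fun t : ℝ => (t ^ m)⁻¹) (-(m : ℝ) * ((b + B x x) ^ (m + 1))⁻¹)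
      (b + B x x) := by
    refine ((hasDerivAt_pow m (b + B x x)).inv (pow_ne_zero m hx.ne')).congr_deriv ?_
    rcases m with _ | m
    · simp
    · rw [Nat.add_sub_cancel]
      field_simp
      ring
  refine (hinv.comp_hasFDerivAt x hq).congr_fderiv ?_
  ext v
  simp only [add_apply, smul_apply, smul_eq_mul, ContinuousLinearMap.flip_apply]
  ring

theorem add_apply_self_pos (hB : ∀ x, ‖x‖ ^ 2 ≤ B x x) (hb : 0 < b) (x : E) : 0 < b + B x x := by
  nlinarith [hB x, sq_nonneg ‖x‖]

theorem contDiff_inv_pow_add_apply_self {n : WithTop ℕ∞} (hB : ∀ x, ‖x‖ ^ 2 ≤ B x x)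
    (hb : 0 < b) (m : ℕ) : ContDiff ℝ n fun y => ((b + B y y) ^ m)⁻¹ :=
  ((contDiff_const.add (B.contDiff.clm_apply contDiff_id)).pow m).inv fun y =>
    pow_ne_zero m (add_apply_self_pos hB hb y).ne'

theorem norm_iteratedFDeriv_succ_inv_pow_add_apply_self_le (hB : ∀ x, ‖x‖ ^ 2 ≤ B x x)
    (hb : 0 < b) {r m : ℕ} {C : ℝ} (x : E)
    (h : ∀ j ≤ r, ‖iteratedFDeriv ℝ j (fun y => ((b + B y y) ^ (m + 1))⁻¹) x‖ ≤
      C * ((b + B x x) ^ (m + 1))⁻¹ * (√(b + B x x))⁻¹ ^ j) :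
    ‖iteratedFDeriv ℝ (r + 1) (fun y => ((b + B y y) ^ m)⁻¹) x‖ ≤
      2 ^ r * C * ‖-(m : ℝ) • (B + B.flip)‖ * ((b + B x x) ^ m)⁻¹ *
        (√(b + B x x))⁻¹ ^ (r + 1) := by
  set L := -(m : ℝ) • (B + B.flip)
  have hs := add_apply_self_pos hB hb x
  set w := √(b + B x x)
  have hw : 0 < w := Real.sqrt_pos.2 hs
  have hsw : b + B x x = w ^ 2 := (Real.sq_sqrt hs.le).symm
  have hderiv : fderiv ℝ (fun y => ((b + B y y) ^ m)⁻¹) =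
      fun y => ((b + B y y) ^ (m + 1))⁻¹ • L y :=
    funext fun y => (hasFDerivAt_inv_pow_add_apply_self m (add_apply_self_pos hB hb y)).fderiv
  rw [← norm_iteratedFDeriv_fderiv, hderiv]
  refine (norm_iteratedFDeriv_smul_le_of_le_mul_pow
    (contDiff_inv_pow_add_apply_self hB hb (m + 1)) L.contDiff h
    fun j _ => L.norm_iteratedFDeriv_le_mul_inv_pow hw
      (Real.le_sqrt_of_sq_le (by linarith [hB x])) j).trans_eq ?_
  rw [hsw]
  simp only [inv_pow]
  field_simp
  ring

theorem exists_norm_iteratedFDeriv_inv_pow_add_apply_self_le (hB : ∀ x, ‖x‖ ^ 2 ≤ B x x)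
    (r : ℕ) : ∀ m : ℕ, ∃ C > 0, ∀ j ≤ r, ∀ b > 0, ∀ x,
      ‖iteratedFDeriv ℝ j (fun y => ((b + B y y) ^ m)⁻¹) x‖ ≤
        C * ((b + B x x) ^ m)⁻¹ * (√(b + B x x))⁻¹ ^ j := by
  induction r with
  | zero =>
    refine fun m => ⟨1, one_pos, fun j hj b hb x => ?_⟩
    obtain rfl : j = 0 := by omega
    have hs := add_apply_self_pos hB hb x
    rw [norm_iteratedFDeriv_zero, Real.norm_of_nonneg (by positivity)]
    simp
  | succ r ih =>
    intro m
    obtain ⟨C₀, hC₀, h₀⟩ := ih m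
    obtain ⟨C₁, -, h₁⟩ := ih (m + 1)
    refine ⟨max C₀ (2 ^ r * C₁ * ‖-(m : ℝ) • (B + B.flip)‖), lt_max_of_lt_left hC₀,
      fun j hj b hb x => ?_⟩
    have hs := add_apply_self_pos hB hb x
    rcases Nat.lt_succ_iff_lt_or_eq.1 (Nat.lt_succ_of_le hj) with hj | rfl
    · exact (h₀ j (by omega) b hb x).trans (by gcongr; exact le_max_left _ _)
    · exact (norm_iteratedFDeriv_succ_inv_pow_add_apply_self_le hB hb x
        fun j hj => h₁ j hj b hb x).trans (by gcongr; exact le_max_right _ _)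

end QuadraticForm

theorem le_mul_rpow_mul_rpow_interpolate {u K a ρ α₀ α₁ β₀ β₁ α β ϑ : ℝ} (hu : 0 ≤ u)
    (hK : 0 ≤ K) (ha : 0 < a) (hρ : 0 < ρ) (hϑ : ϑ ∈ Set.Icc (0 : ℝ) 1)
    (h₀ : u ≤ K * a ^ α₀ * ρ ^ β₀) (h₁ : u ≤ K * a ^ α₁ * ρ ^ β₁)
    (hα : α = (1 - ϑ) * α₀ + ϑ * α₁) (hβ : β = (1 - ϑ) * β₀ + ϑ * β₁) :
    u ≤ K * a ^ α * ρ ^ β := by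
  obtain ⟨hϑ₀, hϑ₁⟩ := hϑ
  have hsplit : ∀ {v : ℝ}, 0 ≤ v → v = v ^ (1 - ϑ) * v ^ ϑ := fun hv => by
    rw [← Real.rpow_add' hv (by simp), sub_add_cancel, Real.rpow_one]
  have hpow : ∀ s α' β' : ℝ, (K * a ^ α' * ρ ^ β') ^ s = K ^ s * a ^ (s * α') * ρ ^ (s * β') :=
    fun s α' β' => by
      rw [Real.mul_rpow (by positivity) (by positivity), Real.mul_rpow hK (by positivity),
        ← Real.rpow_mul ha.le, ← Real.rpow_mul hρ.le, mul_comm α', mul_comm β']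
  calc u = u ^ (1 - ϑ) * u ^ ϑ := hsplit hu
    _ ≤ (K * a ^ α₀ * ρ ^ β₀) ^ (1 - ϑ) * (K * a ^ α₁ * ρ ^ β₁) ^ ϑ := by gcongr
    _ = K ^ (1 - ϑ) * K ^ ϑ * a ^ α * ρ ^ β := by
      rw [hpow, hpow, hα, hβ, Real.rpow_add ha, Real.rpow_add hρ]
      ring
    _ = K * a ^ α * ρ ^ β := by rw [← hsplit hK]

theorem inv_sqrt_add_le_two_mul_inv_one_add_sqrt {b q : ℝ} (hb : 1 ≤ b) (hq : 0 ≤ q) :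
    (√(b + q))⁻¹ ≤ 2 * (1 + √q)⁻¹ := by
  have h1 : 1 ≤ √(b + q) := Real.one_le_sqrt.2 (by linarith)
  have h2 : √q ≤ √(b + q) := Real.sqrt_le_sqrt (by linarith)
  calc (√(b + q))⁻¹ = 2 * (2 * √(b + q))⁻¹ := by field_simp
    _ ≤ 2 * (1 + √q)⁻¹ := by gcongr; linarith

theorem inv_add_le_sq_two_mul_inv_one_add_sqrt {b q : ℝ} (hb : 1 ≤ b) (hq : 0 ≤ q) :
    (b + q)⁻¹ ≤ (2 * (1 + √q)⁻¹) ^ 2 := by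
  rw [← Real.sq_sqrt (by linarith : 0 ≤ b + q), ← inv_pow]
  exact pow_le_pow_left₀ (by positivity) (inv_sqrt_add_le_two_mul_inv_one_add_sqrt hb hq) 2

theorem two_mul_inv_pow_eq_rpow {ρ : ℝ} (hρ : 0 ≤ ρ) (n : ℕ) :
    (2 * ρ⁻¹) ^ n = 2 ^ n * ρ ^ (-(n : ℝ)) := by
  rw [Real.rpow_neg hρ, Real.rpow_natCast, mul_pow, inv_pow]

section SumSq

variable {ι : Type*} [Fintype ι]

theorem sq_norm_le_sum_sq (x : ι → ℝ) : ‖x‖ ^ 2 ≤ ∑ i, x i ^ 2 := by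
  refine (Real.le_sqrt (norm_nonneg x) (by positivity)).1
    ((pi_norm_le_iff_of_nonneg (Real.sqrt_nonneg _)).2 fun i => Real.abs_le_sqrt ?_)
  exact Finset.single_le_sum (f := fun j => x j ^ 2) (fun j _ => sq_nonneg _) (Finset.mem_univ i)

theorem contDiff_inv_add_sum_sq {n : WithTop ℕ∞} {c : ℝ} (hc : 0 < c) :
    ContDiff ℝ n fun y : ι → ℝ => (c + ∑ i, y i ^ 2)⁻¹ :=
  (contDiff_const.add (ContDiff.sum fun i _ => (contDiff_apply ℝ ℝ i).pow 2)).inv fun y =>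
    (show 0 < c + ∑ i, y i ^ 2 by positivity).ne'

theorem exists_norm_iteratedFDeriv_inv_add_sum_sq_le (r : ℕ) :
    ∃ C > 0, ∀ j ≤ r, ∀ b ≥ 1, ∀ x : ι → ℝ,
      ‖iteratedFDeriv ℝ j (fun y : ι → ℝ => (b + ∑ i, y i ^ 2)⁻¹) x‖ ≤
        C * (b + ∑ i, x i ^ 2)⁻¹ * (2 * (1 + √(∑ i, x i ^ 2))⁻¹) ^ j := by
  have hB : ∀ y : ι → ℝ, (dotProductBilin ℝ ℝ).toContinuousBilinearMap y y = ∑ i, y i ^ 2 :=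
    fun y => by simp [dotProduct, sq]
  obtain ⟨C, hC, h⟩ := exists_norm_iteratedFDeriv_inv_pow_add_apply_self_le
    (fun y => (hB y).symm ▸ sq_norm_le_sum_sq y) r 1
  refine ⟨C, hC, fun j hj b hb x => ?_⟩
  have hx := h j hj b (by linarith) x
  simp only [hB, pow_one] at hx
  refine hx.trans ?_
  have hq : 0 ≤ ∑ i, x i ^ 2 := by positivity
  gcongr
  exact inv_sqrt_add_le_two_mul_inv_one_add_sqrt hb hq

theorem exists_norm_iteratedFDeriv_neg_inv_add_sum_sq_le {ϑ : ℝ} (hϑ : ϑ ∈ Set.Icc (0 : ℝ) 1)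
    (r : ℕ) : ∃ K > 0, ∀ a b : ℝ, 0 < a → a ≤ b → 1 ≤ b → ∀ x : ι → ℝ,
      ‖iteratedFDeriv ℝ r (fun y : ι → ℝ => -(b + ∑ i, y i ^ 2)⁻¹) x‖ ≤
        K * a ^ (ϑ - 1) * (1 + √(∑ i, x i ^ 2)) ^ (-(2 * ϑ) - (r : ℝ)) := by
  obtain ⟨C, hC, h⟩ := exists_norm_iteratedFDeriv_inv_add_sum_sq_le (ι := ι) r
  refine ⟨C * 2 ^ (2 + r), by positivity, fun a b ha hab hb x => ?_⟩
  set q := ∑ i, x i ^ 2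
  have hq : 0 ≤ q := by positivity
  have hρ : 0 < 1 + √q := by positivity
  have hD : ‖iteratedFDeriv ℝ r (fun y : ι → ℝ => -(b + ∑ i, y i ^ 2)⁻¹) x‖ ≤
      C * (b + q)⁻¹ * (2 * (1 + √q)⁻¹) ^ r := by
    rw [show (fun y : ι → ℝ => -(b + ∑ i, y i ^ 2)⁻¹) = -fun y => (b + ∑ i, y i ^ 2)⁻¹ from rfl,
      iteratedFDeriv_neg, Pi.neg_apply, norm_neg]
    exact h r le_rfl b hb x
  refine le_mul_rpow_mul_rpow_interpolate (norm_nonneg _) (by positivity) ha hρ hϑ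
    (α₀ := -1) (β₀ := -r) (α₁ := 0) (β₁ := -((2 + r : ℕ) : ℝ)) ?_ ?_ (by ring) (by push_cast; ring)
  · calc _ ≤ C * a⁻¹ * (2 * (1 + √q)⁻¹) ^ r := hD.trans (by gcongr; linarith)
      _ = C * 2 ^ r * a ^ (-1 : ℝ) * (1 + √q) ^ (-(r : ℝ)) := by
        rw [Real.rpow_neg_one, two_mul_inv_pow_eq_rpow hρ.le]
        ring
      _ ≤ C * 2 ^ (2 + r) * a ^ (-1 : ℝ) * (1 + √q) ^ (-(r : ℝ)) := by
        gcongr <;> norm_num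
  · calc _ ≤ C * (2 * (1 + √q)⁻¹) ^ 2 * (2 * (1 + √q)⁻¹) ^ r :=
          hD.trans (by gcongr; exact inv_add_le_sq_two_mul_inv_one_add_sqrt hb hq)
      _ = C * 2 ^ (2 + r) * a ^ (0 : ℝ) * (1 + √q) ^ (-((2 + r : ℕ) : ℝ)) := by
        rw [mul_assoc, ← pow_add, two_mul_inv_pow_eq_rpow hρ.le, Real.rpow_zero]
        ring

theorem norm_iteratedFDeriv_neg_inv_add_inv_le {b C P : ℝ} {r : ℕ} {x : ι → ℝ} (hb : 1 ≤ b)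
    (hf : ∀ c ≥ 1, ∀ j ≤ r,
      ‖iteratedFDeriv ℝ j (fun y : ι → ℝ => (c + ∑ i, y i ^ 2)⁻¹) x‖ ≤ C * P ^ 2 * P ^ j) :
    ‖iteratedFDeriv ℝ r
        (fun y : ι → ℝ => -(b + ∑ i, y i ^ 2)⁻¹ + (1 + ∑ i, y i ^ 2)⁻¹) x‖ ≤
      2 * C * P ^ (2 + r) := by
  set f : ℝ → (ι → ℝ) → ℝ := fun c y => (c + ∑ i, y i ^ 2)⁻¹
  rw [show (fun y : ι → ℝ => -(b + ∑ i, y i ^ 2)⁻¹ + (1 + ∑ i, y i ^ 2)⁻¹) = -f b + f 1 from rfl,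
    iteratedFDeriv_add_apply (f := -f b) (contDiff_inv_add_sum_sq (by linarith)).neg.contDiffAt
      (contDiff_inv_add_sum_sq one_pos).contDiffAt, iteratedFDeriv_neg, Pi.neg_apply]
  calc _ ≤ ‖iteratedFDeriv ℝ r (f b) x‖ + ‖iteratedFDeriv ℝ r (f 1) x‖ :=
        (norm_add_le _ _).trans_eq (by rw [norm_neg])
    _ ≤ C * P ^ 2 * P ^ r + C * P ^ 2 * P ^ r :=
        add_le_add (hf b hb r le_rfl) (hf 1 le_rfl r le_rfl)
    _ = 2 * C * P ^ (2 + r) := by ring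

theorem norm_iteratedFDeriv_neg_inv_add_inv_le_sub_one_mul {b C P : ℝ} {r : ℕ} {x : ι → ℝ}
    (hb : 1 ≤ b) (hf : ∀ c ≥ 1, ∀ j ≤ r,
      ‖iteratedFDeriv ℝ j (fun y : ι → ℝ => (c + ∑ i, y i ^ 2)⁻¹) x‖ ≤ C * P ^ 2 * P ^ j) :
    ‖iteratedFDeriv ℝ r
        (fun y : ι → ℝ => -(b + ∑ i, y i ^ 2)⁻¹ + (1 + ∑ i, y i ^ 2)⁻¹) x‖ ≤
      (b - 1) * (2 ^ r * C * C * P ^ (2 + 2 + r)) := by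
  set f : ℝ → (ι → ℝ) → ℝ := fun c y => (c + ∑ i, y i ^ 2)⁻¹
  have hsmooth : ∀ c ≥ 1, ContDiff ℝ r (f c) := fun c hc => contDiff_inv_add_sum_sq (by linarith)
  have hresolvent : (fun y : ι → ℝ => -(b + ∑ i, y i ^ 2)⁻¹ + (1 + ∑ i, y i ^ 2)⁻¹) =
      (b - 1) • fun y => f b y • f 1 y := by
    ext y
    have : 0 ≤ ∑ i, y i ^ 2 := by positivity
    simp only [f, Pi.smul_apply, smul_eq_mul]
    field_simp
    ring
  rw [hresolvent, iteratedFDeriv_const_smul_apply (f := fun y => f b y • f 1 y)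
    ((hsmooth b hb).smul (hsmooth 1 le_rfl)).contDiffAt, norm_smul,
    Real.norm_of_nonneg (by linarith)]
  gcongr
  calc _ ≤ 2 ^ r * (C * P ^ 2) * (C * P ^ 2) * P ^ r :=
        norm_iteratedFDeriv_smul_le_of_le_mul_pow (hsmooth b hb) (hsmooth 1 le_rfl)
          (hf b hb) (hf 1 le_rfl)
    _ = 2 ^ r * C * C * P ^ (2 + 2 + r) := by ring

theorem exists_norm_iteratedFDeriv_neg_inv_add_inv_le {ϑ : ℝ} (hϑ : ϑ ∈ Set.Icc (0 : ℝ) 1)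
    (r : ℕ) : ∃ K > 0, ∀ a b : ℝ, 0 < a → 1 ≤ b → b - 1 ≤ a → ∀ x : ι → ℝ,
      ‖iteratedFDeriv ℝ r
          (fun y : ι → ℝ => -(b + ∑ i, y i ^ 2)⁻¹ + (1 + ∑ i, y i ^ 2)⁻¹) x‖ ≤
        K * a ^ ϑ * (1 + √(∑ i, x i ^ 2)) ^ (-2 - 2 * ϑ - (r : ℝ)) := by
  obtain ⟨C, hC, h⟩ := exists_norm_iteratedFDeriv_inv_add_sum_sq_le (ι := ι) r
  refine ⟨max (2 * C * 2 ^ (2 + r)) (2 ^ r * C * C * 2 ^ (2 + 2 + r)), by positivity,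
    fun a b ha hb hba x => ?_⟩
  have hq : 0 ≤ ∑ i, x i ^ 2 := by positivity
  have hρ : 0 < 1 + √(∑ i, x i ^ 2) := by positivity
  have hf : ∀ c ≥ 1, ∀ j ≤ r, ‖iteratedFDeriv ℝ j (fun y : ι → ℝ => (c + ∑ i, y i ^ 2)⁻¹) x‖ ≤
      C * (2 * (1 + √(∑ i, x i ^ 2))⁻¹) ^ 2 * (2 * (1 + √(∑ i, x i ^ 2))⁻¹) ^ j :=
    fun c hc j hj => (h j hj c hc x).trans
      (by gcongr; exact inv_add_le_sq_two_mul_inv_one_add_sqrt hc hq)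
  refine le_mul_rpow_mul_rpow_interpolate (norm_nonneg _) (by positivity) ha hρ hϑ
    (α₀ := 0) (β₀ := -((2 + r : ℕ) : ℝ)) (α₁ := 1) (β₁ := -((2 + 2 + r : ℕ) : ℝ)) ?_ ?_
    (by ring) (by push_cast; ring)
  · calc _ ≤ _ := norm_iteratedFDeriv_neg_inv_add_inv_le hb hf
      _ = 2 * C * 2 ^ (2 + r) * a ^ (0 : ℝ) * (1 + √(∑ i, x i ^ 2)) ^ (-((2 + r : ℕ) : ℝ)) := by
        rw [two_mul_inv_pow_eq_rpow hρ.le, Real.rpow_zero]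
        ring
      _ ≤ _ := by gcongr; exact le_max_left _ _
  · calc _ ≤ _ := norm_iteratedFDeriv_neg_inv_add_inv_le_sub_one_mul hb hf
      _ ≤ a * (2 ^ r * C * C * (2 * (1 + √(∑ i, x i ^ 2))⁻¹) ^ (2 + 2 + r)) := by gcongr
      _ = 2 ^ r * C * C * 2 ^ (2 + 2 + r) * a ^ (1 : ℝ) *
          (1 + √(∑ i, x i ^ 2)) ^ (-((2 + 2 + r : ℕ) : ℝ)) := by
        rw [two_mul_inv_pow_eq_rpow hρ.le, Real.rpow_one]
        ring
      _ ≤ _ := by gcongr; exact le_max_right _ _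

end SumSq

theorem statement9_general (d : ℕ) (r : ℕ) (ϑ : ℝ) (hϑ : ϑ ∈ Set.Icc (0 : ℝ) 1) :
    ∃ C : ℝ, 0 < C ∧
      (∀ a : ℝ, 0 < a → ∀ x : Fin d → ℝ,
        ‖iteratedFDeriv ℝ r (fun y : Fin d → ℝ => -(1 + a + ∑ i, y i ^ 2)⁻¹) x‖ ≤
          C * a ^ (ϑ - 1) * (1 + Real.sqrt (∑ i, x i ^ 2)) ^ (-(2 * ϑ) - (r : ℝ))) ∧
      (∀ a : ℝ, 0 < a → ∀ x : Fin d → ℝ,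
        ‖iteratedFDeriv ℝ r
            (fun y : Fin d → ℝ => -(1 + a + ∑ i, y i ^ 2)⁻¹ + (1 + ∑ i, y i ^ 2)⁻¹) x‖ ≤
          C * a ^ ϑ * (1 + Real.sqrt (∑ i, x i ^ 2)) ^ (-2 - 2 * ϑ - (r : ℝ))) ∧
      (∀ a : ℝ, 2 ≤ a → ∀ x : Fin d → ℝ,
        ‖iteratedFDeriv ℝ r (fun y : Fin d → ℝ => -(a + ∑ i, y i ^ 2)⁻¹) x‖ ≤
          C * a ^ (ϑ - 1) * (1 + Real.sqrt (∑ i, x i ^ 2)) ^ (-(2 * ϑ) - (r : ℝ))) ∧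
      (∀ a : ℝ, 2 ≤ a → ∀ x : Fin d → ℝ,
        ‖iteratedFDeriv ℝ r
            (fun y : Fin d → ℝ => -(a + ∑ i, y i ^ 2)⁻¹ + (1 + ∑ i, y i ^ 2)⁻¹) x‖ ≤
          C * a ^ ϑ * (1 + Real.sqrt (∑ i, x i ^ 2)) ^ (-2 - 2 * ϑ - (r : ℝ))) := by
  obtain ⟨K₁, hK₁, h₁⟩ := exists_norm_iteratedFDeriv_neg_inv_add_sum_sq_le (ι := Fin d) hϑ r
  obtain ⟨K₂, -, h₂⟩ := exists_norm_iteratedFDeriv_neg_inv_add_inv_le (ι := Fin d) hϑ r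
  refine ⟨max K₁ K₂, lt_max_of_lt_left hK₁, fun a ha x => ?_, fun a ha x => ?_,
    fun a ha x => ?_, fun a ha x => ?_⟩
  · exact (h₁ a (1 + a) ha (by linarith) (by linarith) x).trans (by gcongr; exact le_max_left ..)
  · exact (h₂ a (1 + a) ha (by linarith) (by linarith) x).trans (by gcongr; exact le_max_right ..)
  · exact (h₁ a a (by linarith) le_rfl (by linarith) x).trans (by gcongr; exact le_max_left ..)
  · exact (h₂ a a (by linarith) (by linarith) (by linarith) x).trans
      (by gcongr; exact le_max_right ..)

/-- resolvent symbol estimates: with `σ(x) = -1/(1+|x|²)`,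
`σ_a(x) = -1/(1+a+|x|²)` and `σ̃_a(x) = -1/(a+|x|²)` on `ℝ^d`, for every derivative order `r`
and every `ϑ ∈ [0,1]` there is a constant `C` with
(i) `|D^r σ_a(x)| ≤ C a^{ϑ-1} (1+|x|)^{-2ϑ-r}` for `a > 0`;
(ii) `|D^r (σ_a - σ)(x)| ≤ C a^{ϑ} (1+|x|)^{-2-2ϑ-r}` for `a > 0`;
(iii) `|D^r σ̃_a(x)| ≤ C a^{ϑ-1} (1+|x|)^{-2ϑ-r}` for `a ≥ 2`;
(iv) `|D^r (σ̃_a - σ)(x)| ≤ C a^{ϑ} (1+|x|)^{-2-2ϑ-r}` for `a ≥ 2`. -/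
theorem statement9 (d : ℕ) (hd : 0 < d) (r : ℕ) (ϑ : ℝ) (hϑ : ϑ ∈ Set.Icc (0 : ℝ) 1) :
    ∃ C : ℝ, 0 < C ∧
      (∀ a : ℝ, 0 < a → ∀ x : Fin d → ℝ,
        ‖iteratedFDeriv ℝ r (fun y : Fin d → ℝ => -(1 + a + ∑ i, y i ^ 2)⁻¹) x‖ ≤
          C * a ^ (ϑ - 1) * (1 + Real.sqrt (∑ i, x i ^ 2)) ^ (-(2 * ϑ) - (r : ℝ))) ∧
      (∀ a : ℝ, 0 < a → ∀ x : Fin d → ℝ,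
        ‖iteratedFDeriv ℝ r
            (fun y : Fin d → ℝ => -(1 + a + ∑ i, y i ^ 2)⁻¹ + (1 + ∑ i, y i ^ 2)⁻¹) x‖ ≤
          C * a ^ ϑ * (1 + Real.sqrt (∑ i, x i ^ 2)) ^ (-2 - 2 * ϑ - (r : ℝ))) ∧
      (∀ a : ℝ, 2 ≤ a → ∀ x : Fin d → ℝ,
        ‖iteratedFDeriv ℝ r (fun y : Fin d → ℝ => -(a + ∑ i, y i ^ 2)⁻¹) x‖ ≤
          C * a ^ (ϑ - 1) * (1 + Real.sqrt (∑ i, x i ^ 2)) ^ (-(2 * ϑ) - (r : ℝ))) ∧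
      (∀ a : ℝ, 2 ≤ a → ∀ x : Fin d → ℝ,
        ‖iteratedFDeriv ℝ r
            (fun y : Fin d → ℝ => -(a + ∑ i, y i ^ 2)⁻¹ + (1 + ∑ i, y i ^ 2)⁻¹) x‖ ≤
          C * a ^ ϑ * (1 + Real.sqrt (∑ i, x i ^ 2)) ^ (-2 - 2 * ϑ - (r : ℝ))) :=
  statement9_general d r ϑ hϑ
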